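/- For retrograde orbits, i.e. whenever αβ ≤ 0, the radius of marginally stable orbits satisfies x_{ms}(α,β) ≥ 4, with equality only for α = 1 and β = 0 (so in particular x_{ms} > 4 in the sub-extremal case α < 1). -/
import Mathlib


open Real Filter Topology Set

noncomputable section

/-- `h(x) = x(x−3) + 2α²(1−β²) + 2αβ√(x − α²(1−β²))`. -/
def hfun (α β x : ℝ) : ℝ :=
  x * (x - 3) + 2 * α ^ 2 * (1 - β ^ 2) + 2 * α * β * Real.sqrt (x - α ^ 2 * (1 - β ^ 2))

/-- `G(x) = x·Δ̄(x) − [h(x) − x(x−1)]²`, with `Δ̄(x) = x² − 2x + α²`. -/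
def Gfun (α β x : ℝ) : ℝ :=
  x * (x ^ 2 - 2 * x + α ^ 2) - (hfun α β x - x * (x - 1)) ^ 2

/-- The effective potential `w_{α,β,λ}(x) = αβλ/x² + √(Δ̄(x)(1 + λ²/x²))`. -/
def wfun (α β lam x : ℝ) : ℝ :=
  α * β * lam / x ^ 2 + Real.sqrt ((x ^ 2 - 2 * x + α ^ 2) * (1 + lam ^ 2 / x ^ 2))

/-- `λ_{sph}(x) = x(√(x − α²(1−β²)) − αβ)/√(h(x))`. -/
def lamsph (α β x : ℝ) : ℝ :=
  x * (Real.sqrt (x - α ^ 2 * (1 - β ^ 2)) - α * β) / Real.sqrt (hfun α β x)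

/-- `ε_{sph}(x) = (x² − 2x + α²(1−β²) + αβ√(x − α²(1−β²)))/(x√(h(x)))`. -/
def epssph (α β x : ℝ) : ℝ :=
  (x ^ 2 - 2 * x + α ^ 2 * (1 - β ^ 2) + α * β * Real.sqrt (x - α ^ 2 * (1 - β ^ 2))) /
    (x * Real.sqrt (hfun α β x))

/-- For retrograde orbits (`αβ ≤ 0`), the radius of marginally stable orbits
satisfies `x_{ms} ≥ 4`, with equality only for `α = 1`, `β = 0`; in particular
`x_{ms} > 4` in the sub-extremal case `α < 1`. -/
theorem xms_gt_four_retrograde (α β : ℝ) (hα0 : 0 ≤ α) (hα1 : α < 1)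
    (hβ0 : -1 ≤ β) (hβ1 : β ≤ 1) (hretro : α * β ≤ 0)
    (xph : ℝ)
    (hph1 : 1 + Real.sqrt (1 - α ^ 2) < xph) (hph2 : hfun α β xph = 0)
    (hph3 : ∀ x : ℝ, 1 + Real.sqrt (1 - α ^ 2) < x → x < xph → hfun α β x < 0)
    (hph4 : ∀ x : ℝ, xph < x → 0 < hfun α β x)
    (xms : ℝ)
    (hms1 : xph < xms) (hms2 : Gfun α β xms = 0)
    (hms3 : ∀ x : ℝ, xph ≤ x → x < xms → Gfun α β x < 0)
    (hms4 : ∀ x : ℝ, xms < x → 0 < Gfun α β x) :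
    4 < xms := by
  by_contra hle
  push_neg at hle
  have hβ2 : β ^ 2 ≤ 1 := by nlinarith
  have hu : α ^ 2 * (1 - β ^ 2) < 1 := by nlinarith [sq_nonneg α, sq_nonneg β, sq_nonneg (α*β)]
  have hu0 : 0 ≤ α ^ 2 * (1 - β ^ 2) := by nlinarith [sq_nonneg α]
  have hs2 : Real.sqrt (4 - α ^ 2 * (1 - β ^ 2)) ^ 2 = 4 - α ^ 2 * (1 - β ^ 2) :=
    Real.sq_sqrt (by nlinarith)
  have hs0 : 0 ≤ Real.sqrt (4 - α ^ 2 * (1 - β ^ 2)) := Real.sqrt_nonneg _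
  have hts : 0 ≤ -(α * β) * Real.sqrt (4 - α ^ 2 * (1 - β ^ 2)) :=
    mul_nonneg (by linarith) hs0
  have hG4 : Gfun α β 4 < 0 := by
    unfold Gfun hfun
    norm_num
    nlinarith [hs2, hs0, hts, sq_nonneg (α*β), hu, hu0,
      mul_nonneg hts (by nlinarith : (0:ℝ) ≤ 4 - α ^ 2 * (1 - β ^ 2)),
      mul_nonneg (sq_nonneg (α*β)) (by nlinarith : (0:ℝ) ≤ 3 - α ^ 2 * (1 - β ^ 2)),
      mul_pos (by nlinarith : (0:ℝ) < 1 - α ^ 2 * (1 - β ^ 2)) (by nlinarith : (0:ℝ) < 8 - α ^ 2 * (1 - β ^ 2)),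
      mul_nonneg (sq_nonneg (α*β)) (sq_nonneg (Real.sqrt (4 - α ^ 2 * (1 - β ^ 2))))]
  rcases lt_or_eq_of_le hle with h | h
  · exact absurd (hms4 4 h) (by linarith)
  · rw [h] at hms2; linarith

end
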